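/- Let k be an algebraically closed field, U and W finite-dimensional k-vector spaces, and ρ: U ⊗ O_{P^n} → W ⊗ O_{P^n}(1) a morphism of sheaves on P^n that is not injective. Then for every integer m ≥ (dim U − 1)·n, the twisted kernel ker(ρ)(m) has a nonzero global section, H⁰(ker(ρ)(m)) ≠ 0. -/

import Mathlib

open TensorProduct MvPolynomial Matrix

/-!
In bases of `U` and `W`, `ρhat` becomes multiplication by a matrix `P` of linear forms acting on
`S ^ r`, where `S = k[x₀, …, xₙ]` and `r = dim U`. Take a kernel vector `c` of minimal support and
`j₀` in its support. Minimality makes the columns of `P` indexed by `supp c \ {j₀}` linearly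
independent, so some choice of rows gives a nonsingular `s × s` block `M`, with `s < r`. Cramer's
rule applied to `M` and the column `j₀` gives a vector in the kernel whose entries are `s × s`
minors of `P`, hence homogeneous of degree `s ≤ r - 1`. Multiplying by a power of `x₀` reaches
every degree `m ≥ r - 1`; when `n = 0`, each homogeneous kernel vector is `x₀ ^ d` times a
constant one, so every `m` is reached.
-/

theorem MvPolynomial.IsHomogeneous.eq_C_mul_X_pow {σ R : Type*} [CommSemiring R] [Unique σ]
    {p : MvPolynomial σ R} {d : ℕ} (hp : p.IsHomogeneous d) :
    p = C (p.coeff (Finsupp.single default d)) * X default ^ d := by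
  rw [C_mul_X_pow_eq_monomial]
  ext e
  rw [coeff_monomial]
  split_ifs with he
  · rw [he]
  · refine hp.coeff_eq_zero fun hed => he (Finsupp.unique_ext ?_)
    rw [Finsupp.single_eq_same, ← hed, Finsupp.degree_eq_sum, Fintype.sum_unique]

theorem Matrix.isHomogeneous_det {σ R n : Type*} [CommRing R] [Fintype n] [DecidableEq n]
    {M : Matrix n n (MvPolynomial σ R)} (hM : ∀ i j, (M i j).IsHomogeneous 1) :
    M.det.IsHomogeneous (Fintype.card n) := by
  rw [det_apply]
  refine IsHomogeneous.sum _ _ _ fun τ _ => ?_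
  have hprod := IsHomogeneous.prod Finset.univ (fun i => M (τ i) i) (fun _ => 1)
    fun i _ => hM (τ i) i
  simp only [Finset.sum_const, smul_eq_mul, mul_one, Finset.card_univ] at hprod
  rw [Units.smul_def]
  exact (mem_homogeneousSubmodule _ _).1 (zsmul_mem ((mem_homogeneousSubmodule _ _).2 hprod) _)

namespace Matrix

variable {R : Type*} {ι κ κ' : Type*} [Fintype κ']

section Cramer

variable [CommRing R] [DecidableEq κ] [DecidableEq κ']

/-- On `range g` the Cramer vector `adj M (-P_{e, j₀})` of the block `M = P.submatrix e g`, and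
`det M` at `j₀`; by `mulVec_cramer` it is killed by the rows `e` of `P`. -/
noncomputable def cramerKernelVec (P : Matrix ι κ R) (e : κ' → ι) (g : κ' → κ) (j₀ : κ) :
    κ → R :=
  Function.extend g (cramer (P.submatrix e g) (-fun a => P (e a) j₀)) 0 +
    Pi.single j₀ (P.submatrix e g).det

theorem cramerKernelVec_apply_self (P : Matrix ι κ R) (e : κ' → ι) {g : κ' → κ} {j₀ : κ}
    (hj₀ : j₀ ∉ Set.range g) :
    cramerKernelVec P e g j₀ j₀ = (P.submatrix e g).det := by
  simp [cramerKernelVec, Function.extend_apply' _ _ _ (by simpa using hj₀)]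

theorem isHomogeneous_cramerKernelVec {σ : Type*} {P : Matrix ι κ (MvPolynomial σ R)}
    (hP : ∀ i j, (P i j).IsHomogeneous 1) (e : κ' → ι) {g : κ' → κ}
    (hg : Function.Injective g) (j₀ j : κ) :
    (cramerKernelVec P e g j₀ j).IsHomogeneous (Fintype.card κ') := by
  refine IsHomogeneous.add ?_ ?_
  · by_cases hj : ∃ a, g a = j
    · obtain ⟨a, rfl⟩ := hj
      rw [hg.extend_apply, cramer_apply]
      refine isHomogeneous_det fun a' b => ?_
      rw [updateCol_apply]
      split_ifs
      exacts [(hP _ _).neg, hP _ _]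
    · rw [Function.extend_apply' _ _ _ hj]
      exact isHomogeneous_zero _ _ _
  · rw [Pi.single_apply]
    split_ifs
    exacts [isHomogeneous_det fun a b => hP (e a) (g b), isHomogeneous_zero _ _ _]

end Cramer

variable [Fintype κ]

theorem mulVec_eq_submatrix_mulVec [NonUnitalNonAssocSemiring R] (P : Matrix ι κ R)
    {g : κ' → κ} (hg : Function.Injective g) {v : κ → R} (hv : ∀ j ∉ Set.range g, v j = 0) :
    P *ᵥ v = P.submatrix id g *ᵥ (v ∘ g) :=
  funext fun _ => (Fintype.sum_of_injective g hg _ _ (fun j hj => by simp [hv j hj])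
    fun _ => rfl).symm

theorem mulVec_extend_eq_submatrix_mulVec [NonUnitalNonAssocSemiring R] (P : Matrix ι κ R)
    {g : κ' → κ} (hg : Function.Injective g) (w : κ' → R) :
    P *ᵥ Function.extend g w 0 = P.submatrix id g *ᵥ w := by
  rw [P.mulVec_eq_submatrix_mulVec (v := Function.extend g w 0) hg
    fun j hj => Function.extend_apply' _ _ _ (by simpa using hj)]
  exact congrArg _ (funext (hg.extend_apply w 0))

theorem exists_submatrix_det_ne_zero_of_field {K : Type*} [Field K] [Fintype ι] [DecidableEq κ]
    (B : Matrix ι κ K) (hB : LinearIndependent K B.col) :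
    ∃ e : κ → ι, (B.submatrix e id).det ≠ 0 := by
  have hspan : Submodule.span K (Set.range B.row) = ⊤ := by
    apply Submodule.eq_top_of_finrank_eq
    rw [← rank_eq_finrank_span_row, ← rank_transpose,
      (show LinearIndependent K Bᵀ.row from hB).rank_matrix, Module.finrank_fintype_fun_eq_card]
  obtain ⟨κ₀, a, -, hspan₀, hli⟩ := exists_linearIndependent' K B.row
  let eqv := (Module.Basis.mk hli (hspan₀.trans hspan).ge).indexEquiv (Pi.basisFun K κ)
  refine ⟨a ∘ eqv.symm, ?_⟩
  have hrows : LinearIndependent K (B.submatrix (a ∘ eqv.symm) id).row :=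
    hli.comp _ eqv.symm.injective
  exact ((isUnit_iff_isUnit_det _).1 (linearIndependent_rows_iff_isUnit.1 hrows)).ne_zero

theorem exists_submatrix_det_ne_zero [CommRing R] [IsDomain R] [Fintype ι] [DecidableEq κ]
    (B : Matrix ι κ R) (hB : LinearIndependent R B.col) :
    ∃ e : κ → ι, (B.submatrix e id).det ≠ 0 := by
  let K := FractionRing R
  have hBK : LinearIndependent K (B.map (algebraMap R K)).col := by
    rw [← LinearIndependent.iff_fractionRing R K]
    exact hB.map' (LinearMap.compLeft (Algebra.linearMap R K) ι)
      (LinearMap.ker_eq_bot.2 (IsFractionRing.injective R K).comp_left)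
  obtain ⟨e, he⟩ := exists_submatrix_det_ne_zero_of_field _ hBK
  refine ⟨e, fun h => he ?_⟩
  rw [submatrix_map, ← RingHom.mapMatrix_apply, ← RingHom.map_det, h, map_zero]

theorem exists_mulVec_eq_zero_support_minimal [NonUnitalNonAssocSemiring R] (P : Matrix ι κ R)
    (h : ∃ v ≠ 0, P *ᵥ v = 0) :
    ∃ c ≠ 0, P *ᵥ c = 0 ∧
      ∀ v ≠ 0, P *ᵥ v = 0 → ¬ Function.support v ⊂ Function.support c := by
  obtain ⟨v, hv0, hv⟩ := h
  obtain ⟨c, ⟨hc0, hc⟩, hmin⟩ := (InvImage.wf Function.support wellFounded_lt).has_min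
    {v | v ≠ 0 ∧ P *ᵥ v = 0} ⟨v, hv0, hv⟩
  exact ⟨c, hc0, hc, fun v hv0 hv => hmin v ⟨hv0, hv⟩⟩

theorem linearIndependent_col_submatrix_of_support_minimal [CommRing R] (P : Matrix ι κ R)
    {c : κ → R} (hmin : ∀ v ≠ 0, P *ᵥ v = 0 → ¬ Function.support v ⊂ Function.support c)
    {g : κ' → κ} (hg : Function.Injective g) (hgc : Set.range g ⊂ Function.support c) :
    LinearIndependent R (P.submatrix id g).col := by
  rw [← mulVec_injective_iff, ← coe_mulVecLin, ← LinearMap.ker_eq_bot, LinearMap.ker_eq_bot']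
  intro w hw
  by_contra hw0
  have hext0 : Function.extend g w 0 ≠ 0 := fun h =>
    hw0 (funext fun a => by simpa [hg.extend_apply] using congrFun h (g a))
  refine hmin _ hext0 (by rwa [mulVec_extend_eq_submatrix_mulVec P hg]) (lt_of_le_of_lt ?_ hgc)
  intro j hj
  by_contra h
  exact hj (Function.extend_apply' _ _ _ (by simpa using h))

section Cramer

variable [CommRing R] [DecidableEq κ] [DecidableEq κ'] (P : Matrix ι κ R) (e : κ' → ι)
  {g : κ' → κ} {j₀ : κ}

theorem mulVec_cramerKernelVec_apply (hg : Function.Injective g) (a : κ') :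
    (P *ᵥ cramerKernelVec P e g j₀) (e a) = 0 := by
  rw [cramerKernelVec, mulVec_add, mulVec_extend_eq_submatrix_mulVec _ hg]
  change (P.submatrix e g *ᵥ _) a + (P *ᵥ Pi.single j₀ _) (e a) = 0
  rw [mulVec_cramer, mulVec_single]
  simp [mul_comm]

theorem mulVec_cramerKernelVec_eq_zero [IsDomain R] (hg : Function.Injective g)
    (hj₀ : j₀ ∉ Set.range g) (hdet : (P.submatrix e g).det ≠ 0) {c : κ → R} (hc : P *ᵥ c = 0)
    (hcj₀ : c j₀ ≠ 0) (hsupp : ∀ j ∉ Set.range g, j ≠ j₀ → c j = 0) :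
    P *ᵥ cramerKernelVec P e g j₀ = 0 := by
  set q := cramerKernelVec P e g j₀
  have hqj₀ : q j₀ = (P.submatrix e g).det := cramerKernelVec_apply_self P e hj₀
  -- `v` is supported on `range g` and killed by the rows `e`, so it vanishes by `hdet`.
  set v := c j₀ • q - q j₀ • c
  have hv : ∀ j ∉ Set.range g, v j = 0 := by
    intro j hj
    by_cases hjj : j = j₀
    · subst hjj
      simp [v, mul_comm]
    · simp [v, q, hsupp j hj hjj, cramerKernelVec, Function.extend_apply' _ _ _ (by simpa using hj),
        hjj]
  have hPv : P *ᵥ v = c j₀ • (P *ᵥ q) := by simp [v, mulVec_sub, mulVec_smul, hc]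
  have hMv : P.submatrix e g *ᵥ (v ∘ g) = 0 := funext fun a => by
    have := congrFun (P.mulVec_eq_submatrix_mulVec hg hv) (e a)
    rw [hPv] at this
    show (P.submatrix id g *ᵥ (v ∘ g)) (e a) = 0
    simpa [q, mulVec_cramerKernelVec_apply P e hg a] using this.symm
  have hvg : v ∘ g = 0 := by
    by_contra h
    exact hdet (exists_mulVec_eq_zero_iff.1 ⟨_, h, hMv⟩)
  have hv0 : v = 0 := by
    funext j
    by_cases hj : j ∈ Set.range g
    · obtain ⟨a, rfl⟩ := hj
      exact congrFun hvg a
    · exact hv j hj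
  have hcPq : c j₀ • (P *ᵥ q) = 0 := by rw [← hPv, hv0, mulVec_zero]
  exact (smul_eq_zero.1 hcPq).resolve_left hcj₀

end Cramer

variable {σ : Type*} [CommRing R]

def HasHomogeneousSyzygy (P : Matrix ι κ (MvPolynomial σ R)) (d : ℕ) : Prop :=
  ∃ q ≠ 0, P *ᵥ q = 0 ∧ ∀ j, (q j).IsHomogeneous d

theorem exists_hasHomogeneousSyzygy_lt_card [IsDomain R] [Fintype ι]
    (P : Matrix ι κ (MvPolynomial σ R)) (hP : ∀ i j, (P i j).IsHomogeneous 1)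
    (h : ∃ v ≠ 0, P *ᵥ v = 0) :
    ∃ d < Fintype.card κ, P.HasHomogeneousSyzygy d := by
  classical
  obtain ⟨c, hc0, hc, hmin⟩ := exists_mulVec_eq_zero_support_minimal P h
  obtain ⟨j₀, hcj₀⟩ := Function.ne_iff.1 hc0
  let s : Finset κ := {j | c j ≠ 0 ∧ j ≠ j₀}
  have hg : Function.Injective ((↑) : s → κ) := Subtype.val_injective
  have hj₀ : j₀ ∉ Set.range ((↑) : s → κ) := by simp [s]
  have hsc : Set.range ((↑) : s → κ) ⊂ Function.support c := by
    refine Set.ssubset_iff_of_subset (fun j hj => ?_) |>.2 ⟨j₀, hcj₀, hj₀⟩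
    obtain ⟨⟨j, hj⟩, rfl⟩ := hj
    exact (Finset.mem_filter.1 hj).2.1
  obtain ⟨e, he⟩ := exists_submatrix_det_ne_zero _
    (linearIndependent_col_submatrix_of_support_minimal P hmin hg hsc)
  refine ⟨Fintype.card s, Fintype.card_lt_of_injective_of_notMem _ hg hj₀,
    cramerKernelVec P e (↑) j₀, Function.ne_iff.2 ⟨j₀, ?_⟩,
    mulVec_cramerKernelVec_eq_zero P e hg hj₀ he hc hcj₀ fun j hj hjj => ?_,
    isHomogeneous_cramerKernelVec hP e hg j₀⟩
  · rw [cramerKernelVec_apply_self P e hj₀]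
    exact he
  · by_contra hcj
    exact hj ⟨⟨j, Finset.mem_filter.2 ⟨Finset.mem_univ _, hcj, hjj⟩⟩, rfl⟩

namespace HasHomogeneousSyzygy

variable [IsDomain R] {P : Matrix ι κ (MvPolynomial σ R)} {d : ℕ}

theorem mul_left (hP : P.HasHomogeneousSyzygy d) {f : MvPolynomial σ R} {e : ℕ}
    (hf : f.IsHomogeneous e) (hf0 : f ≠ 0) : P.HasHomogeneousSyzygy (e + d) :=
  let ⟨q, hq0, hPq, hq⟩ := hP
  ⟨f • q, smul_ne_zero hf0 hq0, by rw [mulVec_smul, hPq, smul_zero], fun j => hf.mul (hq j)⟩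

theorem mono (hP : P.HasHomogeneousSyzygy d) (i : σ) {m : ℕ} (hdm : d ≤ m) :
    P.HasHomogeneousSyzygy m := by
  simpa [Nat.sub_add_cancel hdm] using
    hP.mul_left (isHomogeneous_X_pow i (m - d)) (pow_ne_zero _ (X_ne_zero i))

theorem zero_of_unique [Unique σ] (hP : P.HasHomogeneousSyzygy d) :
    P.HasHomogeneousSyzygy 0 := by
  obtain ⟨q, hq0, hPq, hq⟩ := hP
  let α : κ → MvPolynomial σ R := fun j => C ((q j).coeff (Finsupp.single default d))
  have hqα : q = (X default ^ d : MvPolynomial σ R) • α :=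
    funext fun j => (hq j).eq_C_mul_X_pow.trans (mul_comm _ _)
  refine ⟨α, fun h => hq0 (by rw [hqα, h, smul_zero]), ?_, fun j => isHomogeneous_C _ _⟩
  rw [hqα, mulVec_smul] at hPq
  exact (smul_eq_zero.1 hPq).resolve_left (pow_ne_zero _ (X_ne_zero _))

end HasHomogeneousSyzygy

theorem hasHomogeneousSyzygy_of_le [IsDomain R] [Fintype ι] {n : ℕ}
    (P : Matrix ι κ (MvPolynomial (Fin (n + 1)) R)) (hP : ∀ i j, (P i j).IsHomogeneous 1)
    (h : ∃ v ≠ 0, P *ᵥ v = 0) {m : ℕ} (hm : (Fintype.card κ - 1) * n ≤ m) :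
    P.HasHomogeneousSyzygy m := by
  obtain ⟨d, hd, hsyz⟩ := exists_hasHomogeneousSyzygy_lt_card P hP h
  rcases n with _ | n
  · have : Unique (Fin (0 + 1)) := Fin.instUnique
    exact hsyz.zero_of_unique.mono 0 m.zero_le
  · have : Fintype.card κ - 1 ≤ (Fintype.card κ - 1) * (n + 1) :=
      Nat.le_mul_of_pos_right _ n.succ_pos
    exact hsyz.mono 0 (by omega)

end Matrix

namespace TensorProduct

variable {k A U W : Type*} [CommRing k] [CommRing A] [Algebra k A] [AddCommGroup U] [Module k U]
  [AddCommGroup W] [Module k W] {κ τ : Type*} [Fintype κ] [Fintype τ] [DecidableEq κ]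
  [DecidableEq τ]

noncomputable def equivPiOfBasisLeft (b : Module.Basis κ k U) : U ⊗[k] A ≃ₗ[k] (κ → A) :=
  equivFinsuppOfBasisLeft b ≪≫ₗ Finsupp.linearEquivFunOnFinite k A κ

theorem equivPiOfBasisLeft_apply_tmul (b : Module.Basis κ k U) (u : U) (a : A) :
    equivPiOfBasisLeft b (u ⊗ₜ a) = fun j => b.repr u j • a := by
  ext j
  simp [equivPiOfBasisLeft]

theorem equivPiOfBasisLeft_symm_apply (b : Module.Basis κ k U) (p : κ → A) :
    (equivPiOfBasisLeft b).symm p = ∑ j, b j ⊗ₜ p j := by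
  simp [equivPiOfBasisLeft, equivFinsuppOfBasisLeft_symm_apply, Finsupp.sum_fintype]

theorem equivPiOfBasisLeft_map_mulLeft (b : Module.Basis κ k U) (c : Module.Basis τ k W)
    (φ : U →ₗ[k] W) (a : A) (p : κ → A) :
    equivPiOfBasisLeft c (map φ (LinearMap.mulLeft k a) ((equivPiOfBasisLeft b).symm p)) =
      (a • (LinearMap.toMatrix b c φ).map (algebraMap k A)) *ᵥ p := by
  ext t
  simp only [equivPiOfBasisLeft_symm_apply, map_sum, map_tmul, equivPiOfBasisLeft_apply_tmul,
    LinearMap.mulLeft_apply, Finset.sum_apply, mulVec, dotProduct, Matrix.smul_apply, map_apply,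
    LinearMap.toMatrix_apply, smul_eq_mul]
  refine Finset.sum_congr rfl fun j _ => ?_
  rw [_root_.Algebra.smul_def]
  ring

end TensorProduct

-- `ρhat` is the map on graded modules `U ⊗ S → W ⊗ S(1)`, `S = k[x₀, …, xₙ]`, whose sheafification
-- is the morphism of the paper; a nonzero section of `ker(ρ)(m)` is a kernel element of degree `m`.
theorem stmt4_general (k : Type) [Field k] (n : ℕ)
    (U W : Type) [AddCommGroup U] [Module k U] [FiniteDimensional k U]
    [AddCommGroup W] [Module k W] [FiniteDimensional k W]
    (ρ : U →ₗ[k] (Fin (n + 1) → W))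
    (ρhat : (U ⊗[k] MvPolynomial (Fin (n + 1)) k) →ₗ[k]
      (W ⊗[k] MvPolynomial (Fin (n + 1)) k))
    (hρhat : ρhat = ∑ i : Fin (n + 1),
      TensorProduct.map ((LinearMap.proj i).comp ρ)
        (LinearMap.mulLeft k (X i : MvPolynomial (Fin (n + 1)) k)))
    (hnotinj : ¬ Function.Injective ρhat)
    (m : ℕ) (hm : (Module.finrank k U - 1) * n ≤ m) :
    ∃ f ∈ LinearMap.range (TensorProduct.map (LinearMap.id : U →ₗ[k] U)
        ((MvPolynomial.homogeneousSubmodule (Fin (n + 1)) k m).subtype)),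
      f ≠ 0 ∧ ρhat f = 0 := by
  classical
  let b := Module.finBasis k U
  let c := Module.finBasis k W
  let eU := equivPiOfBasisLeft (A := MvPolynomial (Fin (n + 1)) k) b
  let eW := equivPiOfBasisLeft (A := MvPolynomial (Fin (n + 1)) k) c
  let P := ∑ i, (X i : MvPolynomial (Fin (n + 1)) k) •
    (LinearMap.toMatrix b c ((LinearMap.proj i).comp ρ)).map
      (algebraMap k (MvPolynomial (Fin (n + 1)) k))
  have hP : ∀ t j, (P t j).IsHomogeneous 1 := fun t j => by
    simp only [P, Matrix.sum_apply, Matrix.smul_apply, map_apply, smul_eq_mul]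
    exact IsHomogeneous.sum _ _ _ fun i _ => (isHomogeneous_X k i).mul (isHomogeneous_C _ _)
  have hρP : ∀ p, ρhat (eU.symm p) = eW.symm (P *ᵥ p) := fun p => by
    rw [LinearEquiv.eq_symm_apply, hρhat, LinearMap.sum_apply, map_sum]
    simp only [eU, eW, equivPiOfBasisLeft_map_mulLeft, P, Matrix.sum_mulVec]
  obtain ⟨f₀, hρf₀, hf₀⟩ : ∃ f, ρhat f = 0 ∧ f ≠ 0 := by
    simpa [injective_iff_map_eq_zero] using hnotinj
  obtain ⟨q, hq0, hPq, hq⟩ := hasHomogeneousSyzygy_of_le P hP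
    ⟨eU f₀, by simpa using hf₀, by
      rw [← eW.symm.map_eq_zero_iff, ← hρP, eU.symm_apply_apply, hρf₀]⟩ (by simpa using hm)
  refine ⟨eU.symm q, ?_, by simpa using hq0, by rw [hρP, hPq, map_zero]⟩
  rw [equivPiOfBasisLeft_symm_apply]
  exact Submodule.sum_mem _ fun j _ => ⟨b j ⊗ₜ ⟨q j, hq j⟩, rfl⟩

/-- Lemma 13 of Hein–Ploog: Let U, W be finite-dimensional vector spaces
over an algebraically closed field k and ρ : U ⊗ O_{P^n} → W ⊗ O_{P^n}(1) a morphism of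
sheaves on P^n (given by the linear map ρ : U → W^{n+1} whose components are the
coefficients of the linear forms; ρhat is the induced map on U ⊗ k[x₀,…,x_n]).
If ρ is not injective, then for every m ≥ (dim U − 1)·n the twisted kernel ker(ρ)(m)
has a nonzero global section, i.e. there is a nonzero element of U ⊗ k[x]_m killed by ρhat. -/
theorem stmt4 (k : Type) [Field k] [IsAlgClosed k] (n : ℕ)
    (U W : Type) [AddCommGroup U] [Module k U] [FiniteDimensional k U]
    [AddCommGroup W] [Module k W] [FiniteDimensional k W]
    (ρ : U →ₗ[k] (Fin (n + 1) → W))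
    (ρhat : (U ⊗[k] MvPolynomial (Fin (n + 1)) k) →ₗ[k]
      (W ⊗[k] MvPolynomial (Fin (n + 1)) k))
    (hρhat : ρhat = ∑ i : Fin (n + 1),
      TensorProduct.map ((LinearMap.proj i).comp ρ)
        (LinearMap.mulLeft k (X i : MvPolynomial (Fin (n + 1)) k)))
    (hnotinj : ¬ Function.Injective ρhat)
    (m : ℕ) (hm : (Module.finrank k U - 1) * n ≤ m) :
    ∃ f ∈ LinearMap.range (TensorProduct.map (LinearMap.id : U →ₗ[k] U)
        ((MvPolynomial.homogeneousSubmodule (Fin (n + 1)) k m).subtype)),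
      f ≠ 0 ∧ ρhat f = 0 :=
  stmt4_general k n U W ρ ρhat hρhat hnotinj m hm
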